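/- arXiv:1305.7009 — 2 statements merged into one kernel-verified Lean document; each statement's English description precedes it below -/
import Mathlib

section
/- Let n₁, n₂, n₃ be unit vectors in ℝ³ such that |n_i·n_j| < 1 for every pair i ≠ j (no two of the vectors are parallel or antiparallel). Then √(1 + n₁·n₂) + √(1 + n₁·n₃) + √(1 + n₂·n₃) > √2. -/
/-! With `t = √(1 + n₂·n₃) ∈ (0, √2)`, Cauchy–Schwarz for `n₁·(n₂ + n₃)` gives
`n₁·n₂ + n₁·n₃ ≥ -‖n₂ + n₃‖ = -√2 t`, hence
`(√(1 + n₁·n₂) + √(1 + n₁·n₃))² ≥ 2 + n₁·n₂ + n₁·n₃ ≥ 2 - √2 t > (√2 - t)²`,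
the last step being `t² < √2 t`. -/

noncomputable section

/-- Euclidean inner product on ℝ³. -/
def dot3 (a b : Fin 3 → ℝ) : ℝ := a 0 * b 0 + a 1 * b 1 + a 2 * b 2

/-- Euclidean norm on ℝ³. -/
def norm3 (a : Fin 3 → ℝ) : ℝ := Real.sqrt (dot3 a a)

open RealInnerProductSpace

theorem sqrt_two_lt_sqrt_one_add_add_sqrt_one_add_add_sqrt_one_add {a b c : ℝ}
    (ha : -1 ≤ a) (hb : -1 ≤ b) (hc : |c| < 1) (habc : (a + b) ^ 2 ≤ 2 * (1 + c)) :
    √2 < √(1 + a) + √(1 + b) + √(1 + c) := by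
  obtain ⟨hc₁, hc₂⟩ := abs_lt.mp hc
  set t := √(1 + c)
  have ht_sq : t ^ 2 = 1 + c := Real.sq_sqrt (by linarith)
  have ht_pos : 0 < t := Real.sqrt_pos.mpr (by linarith)
  have ht_lt : t < √2 := Real.sqrt_lt_sqrt (by linarith) (by linarith)
  have hsqrt2_sq : √2 ^ 2 = 2 := Real.sq_sqrt zero_le_two
  have hab : -(√2 * t) ≤ a + b :=
    (abs_le_of_sq_le_sq' (by rw [mul_pow, hsqrt2_sq, ht_sq]; exact habc) (by positivity)).1
  have hsq : (√2 - t) ^ 2 < (√(1 + a) + √(1 + b)) ^ 2 := by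
    nlinarith [Real.sq_sqrt (show 0 ≤ 1 + a by linarith), Real.sq_sqrt (show 0 ≤ 1 + b by linarith),
      mul_nonneg (Real.sqrt_nonneg (1 + a)) (Real.sqrt_nonneg (1 + b)), mul_pos ht_pos (sub_pos.mpr ht_lt)]
  linarith [lt_of_pow_lt_pow_left₀ 2 (by positivity) hsq]

section InnerProductSpace

variable {F : Type*} [NormedAddCommGroup F] [InnerProductSpace ℝ F] {u v w : F}

theorem inner_add_inner_sq_le_of_norm_eq_one (hu : ‖u‖ = 1) (hv : ‖v‖ = 1) (hw : ‖w‖ = 1) :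
    (⟪u, v⟫ + ⟪u, w⟫) ^ 2 ≤ 2 * (1 + ⟪v, w⟫) := by
  rw [← inner_add_right]
  calc ⟪u, v + w⟫ ^ 2 = |⟪u, v + w⟫| ^ 2 := (sq_abs _).symm
    _ ≤ (‖u‖ * ‖v + w‖) ^ 2 := pow_le_pow_left₀ (abs_nonneg _) (abs_real_inner_le_norm u _) 2
    _ = 2 * (1 + ⟪v, w⟫) := by rw [hu, one_mul, norm_add_sq_real, hv, hw]; ring

theorem sqrt_two_lt_sum_sqrt_one_add_inner (hu : ‖u‖ = 1) (hv : ‖v‖ = 1) (hw : ‖w‖ = 1)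
    (hvw : |⟪v, w⟫| < 1) :
    √2 < √(1 + ⟪u, v⟫) + √(1 + ⟪u, w⟫) + √(1 + ⟪v, w⟫) :=
  sqrt_two_lt_sqrt_one_add_add_sqrt_one_add_add_sqrt_one_add
    (neg_one_le_real_inner_of_norm_eq_one hu hv) (neg_one_le_real_inner_of_norm_eq_one hu hw) hvw
    (inner_add_inner_sq_le_of_norm_eq_one hu hv hw)

end InnerProductSpace

theorem dot3_eq_inner (a b : Fin 3 → ℝ) :
    dot3 a b = ⟪WithLp.toLp 2 a, WithLp.toLp 2 b⟫ := by
  simp only [dot3, EuclideanSpace.inner_toLp_toLp, dotProduct, Pi.star_apply, star_trivial,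
    Fin.sum_univ_three]
  ring

theorem norm3_eq_norm (a : Fin 3 → ℝ) : norm3 a = ‖WithLp.toLp 2 a‖ := by
  rw [norm3, dot3_eq_inner, norm_eq_sqrt_real_inner]

theorem sqrt_sum_gt_sqrt_two_general (n₁ n₂ n₃ : Fin 3 → ℝ)
    (h1 : norm3 n₁ = 1) (h2 : norm3 n₂ = 1) (h3 : norm3 n₃ = 1)
    (h23 : |dot3 n₂ n₃| < 1) :
    Real.sqrt 2 <
      Real.sqrt (1 + dot3 n₁ n₂) + Real.sqrt (1 + dot3 n₁ n₃) + Real.sqrt (1 + dot3 n₂ n₃) := by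
  rw [norm3_eq_norm] at h1 h2 h3
  rw [dot3_eq_inner] at h23
  simp only [dot3_eq_inner]
  exact sqrt_two_lt_sum_sqrt_one_add_inner h1 h2 h3 h23

/-- For unit vectors n₁, n₂, n₃ in ℝ³, no two parallel or antiparallel,
√(1 + n₁·n₂) + √(1 + n₁·n₃) + √(1 + n₂·n₃) > √2: the necessary condition for a
state-independent violation of the LSW inequality can never be met. -/
theorem sqrt_sum_gt_sqrt_two (n₁ n₂ n₃ : Fin 3 → ℝ)
    (h1 : norm3 n₁ = 1) (h2 : norm3 n₂ = 1) (h3 : norm3 n₃ = 1)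
    (h12 : |dot3 n₁ n₂| < 1) (h13 : |dot3 n₁ n₃| < 1) (h23 : |dot3 n₂ n₃| < 1) :
    Real.sqrt 2 <
      Real.sqrt (1 + dot3 n₁ n₂) + Real.sqrt (1 + dot3 n₁ n₃) + Real.sqrt (1 + dot3 n₂ n₃) :=
  sqrt_sum_gt_sqrt_two_general n₁ n₂ n₃ h1 h2 h3 h23

end
end

section
/- Let (Ω, μ) be a probability space, let f₁, f₂, f₃ : Ω → {+1, −1} be measurable functions, and let η ∈ [0,1]. Then (1/3)·Σ_{(ij) ∈ {(12),(13),(23)}} (η·μ{ω : f_i(ω) ≠ f_j(ω)} + (1 − η)) ≤ 1 − η/3. (The LSW bound: in the generalized-noncontextual model of Specker's scenario, each pair's anticorrelation probability equals η times the probability that the deterministic assignments disagree, plus (1 − η) from the noise coin flip, and the average of these three quantities is at most 1 − η/3.) -/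
/-!
Three values in `{1, -1}` cannot be pairwise distinct, so the three disagreement events have
empty common intersection; by inclusion–exclusion their probabilities then sum to at most `2`,
and the bound reduces to `η · (sum) ≤ 2η`.
-/

open MeasureTheory

lemma eq_or_eq_or_eq_of_forall_eq_or_eq {β : Type*} {x y a b c : β} (ha : a = x ∨ a = y)
    (hb : b = x ∨ b = y) (hc : c = x ∨ c = y) : a = b ∨ a = c ∨ b = c := by
  rcases ha with rfl | rfl <;> rcases hb with rfl | rfl <;> rcases hc with rfl | rfl <;> simp

lemma setOf_ne_inter_setOf_ne_inter_setOf_ne_eq_empty {Ω β : Type*} {x y : β}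
    {f₁ f₂ f₃ : Ω → β} (h₁ : ∀ ω, f₁ ω = x ∨ f₁ ω = y) (h₂ : ∀ ω, f₂ ω = x ∨ f₂ ω = y)
    (h₃ : ∀ ω, f₃ ω = x ∨ f₃ ω = y) :
    {ω | f₁ ω ≠ f₂ ω} ∩ {ω | f₁ ω ≠ f₃ ω} ∩ {ω | f₂ ω ≠ f₃ ω} = ∅ := by
  ext ω
  simp only [Set.mem_inter_iff, Set.mem_ofPred_eq, Set.mem_empty_iff_false, iff_false]
  rintro ⟨⟨h₁₂, h₁₃⟩, h₂₃⟩
  rcases eq_or_eq_or_eq_of_forall_eq_or_eq (h₁ ω) (h₂ ω) (h₃ ω) with h | h | h <;> contradiction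

lemma measureReal_add_add_le_two_of_inter_eq_empty {α : Type*} [MeasurableSpace α]
    {μ : Measure α} [IsProbabilityMeasure μ] {s t u : Set α}
    (ht : MeasurableSet t) (hu : MeasurableSet u) (hstu : s ∩ t ∩ u = ∅) :
    μ.real s + μ.real t + μ.real u ≤ 2 := by
  have hst : μ.real (s ∪ t) + μ.real (s ∩ t) = μ.real s + μ.real t :=
    measureReal_union_add_inter ht
  have hstu' : μ.real (s ∩ t ∪ u) + μ.real (s ∩ t ∩ u) = μ.real (s ∩ t) + μ.real u :=
    measureReal_union_add_inter hu
  rw [hstu, measureReal_empty] at hstu'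
  linarith [measureReal_le_one (μ := μ) (s := s ∪ t), measureReal_le_one (μ := μ) (s := s ∩ t ∪ u)]

/-- The LSW bound in Specker's scenario: in the generalized-noncontextual model, each
pair's anticorrelation probability is η times the probability that the deterministic
assignments disagree plus (1 - η) from the noise coin flip, and the average over the
three pairs is at most 1 - η/3. -/
theorem lsw_noncontextual_bound {Ω : Type*} [MeasurableSpace Ω]
    (μ : Measure Ω) [IsProbabilityMeasure μ]
    (f₁ f₂ f₃ : Ω → ℝ)
    (m₁ : Measurable f₁) (m₂ : Measurable f₂) (m₃ : Measurable f₃)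
    (r₁ : ∀ ω, f₁ ω = 1 ∨ f₁ ω = -1)
    (r₂ : ∀ ω, f₂ ω = 1 ∨ f₂ ω = -1)
    (r₃ : ∀ ω, f₃ ω = 1 ∨ f₃ ω = -1)
    (η : ℝ) (hη : η ∈ Set.Icc (0 : ℝ) 1) :
    (1/3 : ℝ) * ((η * (μ {ω | f₁ ω ≠ f₂ ω}).toReal + (1 - η)) +
      (η * (μ {ω | f₁ ω ≠ f₃ ω}).toReal + (1 - η)) +
      (η * (μ {ω | f₂ ω ≠ f₃ ω}).toReal + (1 - η))) ≤ 1 - η/3 := by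
  have hsum : μ.real {ω | f₁ ω ≠ f₂ ω} + μ.real {ω | f₁ ω ≠ f₃ ω} +
      μ.real {ω | f₂ ω ≠ f₃ ω} ≤ 2 :=
    measureReal_add_add_le_two_of_inter_eq_empty (measurableSet_eq_fun m₁ m₃).compl
      (measurableSet_eq_fun m₂ m₃).compl
      (setOf_ne_inter_setOf_ne_inter_setOf_ne_eq_empty r₁ r₂ r₃)
  simp only [Measure.real] at hsum
  linarith [mul_le_mul_of_nonneg_left hsum hη.1]
end
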